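/- There exists θ₁ ∈ (0,π/8), depending only on α, such that for all θ ∈ (0,θ₁) the following holds: if p,q ∈ ℍ¹ satisfy z_p ≤ 0, z_q ≤ 0, ρ_q ≤ ρ_p, both lie in the cone C(θ) = {w : |y_w| < x_w tan θ}, q ∉ B(p,r_p), and p ∉ B(q,r_q) (with r_w := d_α(0,w)), then z_q < 2z_p and ρ_q < ρ_p cos(2θ). -/
import Mathlib


open Real

abbrev H : Type := ℝ × ℝ × ℝ

noncomputable section

/-- Heisenberg group law on ℝ³. -/
def hmul (p q : H) : H :=
  (p.1 + q.1, p.2.1 + q.2.1, p.2.2 + q.2.2 + (p.1 * q.2.1 - p.2.1 * q.1) / 2)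

/-- Heisenberg inverse. -/
def hinv (p : H) : H := (-p.1, -p.2.1, -p.2.2)

/-- Heisenberg dilation. -/
def hdil (l : ℝ) (p : H) : H := (l * p.1, l * p.2.1, l ^ 2 * p.2.2)

/-- Horizontal norm ρ. -/
def rho (p : H) : ℝ := Real.sqrt (p.1 ^ 2 + p.2.1 ^ 2)

/-- The homogeneous distance d_α whose unit ball at the origin is the Euclidean ball of radius α. -/
def dA (α : ℝ) (p q : H) : ℝ :=
  Real.sqrt (((rho (hmul (hinv p) q)) ^ 2 +
      Real.sqrt ((rho (hmul (hinv p) q)) ^ 4 + 4 * α ^ 2 * (hmul (hinv p) q).2.2 ^ 2)) /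
    (2 * α ^ 2))

set_option maxHeartbeats 1000000

lemma key (α A E Z U : ℝ) (hU : 0 ≤ U) (hα : 0 ≤ α) (hAE : E ≤ A)
    (h : A + Real.sqrt (A^2 + 4*α^2*U^2) < E + Real.sqrt (E^2 + 4*α^2*Z^2)) :
    2*(A-E)*(A+2*α*U) < 4*α^2*Z^2 - 4*α^2*U^2 := by
  set M := Real.sqrt (A^2+4*α^2*U^2) with hM
  set K := Real.sqrt (E^2+4*α^2*Z^2) with hK
  have hM0 : 0 ≤ M := Real.sqrt_nonneg _
  have hMU : 2*α*U ≤ M := by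
    rw [hM]
    have h1 : (2*α*U)^2 ≤ A^2+4*α^2*U^2 := by nlinarith [sq_nonneg A]
    calc 2*α*U = Real.sqrt ((2*α*U)^2) := (Real.sqrt_sq (by positivity)).symm
      _ ≤ _ := Real.sqrt_le_sqrt h1
  have hM2 : M^2 = A^2+4*α^2*U^2 := Real.sq_sqrt (by positivity)
  have hK2 : K^2 = E^2+4*α^2*Z^2 := Real.sq_sqrt (by positivity)
  have h2 : A - E + M < K := by linarith
  have h3 : (A-E+M)^2 < K^2 := by
    have h0 : 0 ≤ A-E+M := by linarith
    nlinarith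
  nlinarith [hM2, hK2, h3, hMU, mul_le_mul_of_nonneg_left hMU (by linarith : (0:ℝ) ≤ A-E)]

lemma core (α t c a b u v D ω E Z : ℝ)
    (hα : 0 < α) (hα2 : α ≤ 2)
    (ht0 : 0 < t) (ht : t ≤ 1/50)
    (hc : 99/100 ≤ c) (hc1 : c ≤ 1)
    (ha : 0 < a) (hb : 0 < b) (hba : b ≤ a)
    (hu : 0 ≤ u) (hv : 0 ≤ v)
    (hD : a*b*c ≤ D)
    (hw1 : ω ≤ t*(a*b)) (hw2 : -ω ≤ t*(a*b))
    (hE : E = a^2 + b^2 - 2*D) (hZ : Z = u - v - ω)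
    (hP : a^2 + Real.sqrt (a^4 + 4*α^2*u^2) < E + Real.sqrt (E^2 + 4*α^2*Z^2))
    (hQ : b^2 + Real.sqrt (b^4 + 4*α^2*v^2) < E + Real.sqrt (E^2 + 4*α^2*Z^2)) :
    2*u < v ∧ b < a*c := by
  have hP' : a^2 + Real.sqrt ((a^2)^2 + 4*α^2*u^2) < E + Real.sqrt (E^2 + 4*α^2*Z^2) := by
    rw [show ((a:ℝ)^2)^2 = a^4 by ring]; exact hP
  have hQ' : b^2 + Real.sqrt ((b^2)^2 + 4*α^2*v^2) < E + Real.sqrt (E^2 + 4*α^2*Z^2) := by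
    rw [show ((b:ℝ)^2)^2 = b^4 by ring]; exact hQ
  have hαt : α*t ≤ 1/25 := by
    linarith [mul_nonneg hα.le (by linarith : (0:ℝ) ≤ 1/50 - t)]
  have hab0 : 0 < a*b := mul_pos ha hb
  have hc0 : (0:ℝ) ≤ c := by linarith
  have f1 : 99/100*(a*b) ≤ a*b*c := by
    linarith [mul_nonneg hab0.le (by linarith : (0:ℝ) ≤ c - 99/100)]
  have f2 : b*b ≤ a*b := by linarith [mul_nonneg (by linarith : (0:ℝ) ≤ a - b) hb.le]
  have ftab : t*(a*b) ≤ t*a^2 := by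
    linarith [mul_nonneg ht0.le (mul_nonneg ha.le (by linarith : (0:ℝ) ≤ a - b))]
  have h2gen : ∀ w : ℝ, 0 ≤ w → 4*α^2*(2*t*a^2*w) ≤ 8/25*(α*(a^2*w)) := by
    intro w hw
    have e2 : 0 ≤ α*(a^2*w) := by positivity
    linarith [mul_le_mul_of_nonneg_right (by linarith : 8*(α*t) ≤ 8/25) e2]
  have h3gen : 4*α^2*(t^2*a^4) ≤ 4/625*a^4 := by
    linarith [mul_le_mul_of_nonneg_right (mul_self_le_mul_self (by positivity : (0:ℝ) ≤ α*t) hαt)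
      (by positivity : (0:ℝ) ≤ a^4)]
  -- Part 2 : b < a*c
  have hbac : b < a*c := by
    by_contra hbc
    push_neg at hbc  -- a*c ≤ b
    have f3 : 99/100*a ≤ b := by
      linarith [mul_nonneg ha.le (by linarith : (0:ℝ) ≤ c - 99/100)]
    have f4 : 99/100*(a*a) ≤ a*b := by
      linarith [mul_le_mul_of_nonneg_left f3 ha.le]
    rcases le_or_gt 0 Z with hZ0 | hZ0
    · -- use the p-inequality
      have hgap : 48/50*a^2 ≤ a^2 - E := by linarith [f1, f2, f4, hD]
      have hAE : E ≤ a^2 := by linarith [hgap, sq_nonneg a]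
      have hk := key α (a^2) E Z u hu hα.le hAE hP'
      have hta2 : (0:ℝ) ≤ t*a^2 := by positivity
      have hZb : Z ≤ u + t*a^2 := by rw [hZ]; linarith
      have hZsq : Z^2 ≤ (u + t*a^2)^2 := sq_le_sq' (by linarith) hZb
      have h1 : 2*(a^2-E)*(a^2+2*α*u) < 4*α^2*(2*t*a^2*u) + 4*α^2*(t^2*a^4) := by
        linarith [hk, mul_le_mul_of_nonneg_left hZsq (by positivity : (0:ℝ) ≤ 4*α^2)]
      have hpos2 : 0 ≤ a^2+2*α*u := by linarith [mul_nonneg hα.le hu, sq_nonneg a]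
      have h4 : 2*(48/50*a^2)*(a^2+2*α*u) ≤ 2*(a^2-E)*(a^2+2*α*u) := by
        linarith [mul_le_mul_of_nonneg_right hgap hpos2]
      have ha4 : 0 < a^4 := by positivity
      have hY : 0 ≤ α*(a^2*u) := by positivity
      linarith [h1, h4, h2gen u hu, h3gen, ha4, hY]
    · -- Z < 0 : use the q-inequality
      have hb2 : 9801/10000*a^2 ≤ b^2 := by
        linarith [mul_self_le_mul_self (by linarith : (0:ℝ) ≤ 99/100*a) f3]
      have habc : 9801/10000*a^2 ≤ a*b*c := by
        linarith [mul_le_mul_of_nonneg_right f4 hc0,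
          mul_nonneg (mul_nonneg ha.le ha.le) (by linarith : (0:ℝ) ≤ c - 99/100)]
      have hgap : 9602/10000*a^2 ≤ b^2 - E := by linarith [habc, hD]
      have hAE : E ≤ b^2 := by linarith [hgap, sq_nonneg a]
      have hk := key α (b^2) E Z v hv hα.le hAE hQ'
      have hta2 : (0:ℝ) ≤ t*a^2 := by positivity
      have hZb : -Z ≤ v + t*a^2 := by rw [hZ]; linarith
      have hZsq : Z^2 ≤ (v + t*a^2)^2 := by
        have h7 := sq_le_sq' (by linarith : -(v + t*a^2) ≤ -Z) hZb
        linarith [h7]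
      have h1 : 2*(b^2-E)*(b^2+2*α*v) < 4*α^2*(2*t*a^2*v) + 4*α^2*(t^2*a^4) := by
        linarith [hk, mul_le_mul_of_nonneg_left hZsq (by positivity : (0:ℝ) ≤ 4*α^2)]
      have hpos2 : 0 ≤ 9801/10000*a^2+2*α*v := by linarith [mul_nonneg hα.le hv, sq_nonneg a]
      have hbE : 0 ≤ b^2 - E := by linarith [hgap, sq_nonneg a]
      have p1 : 2*(9602/10000*a^2)*(9801/10000*a^2+2*α*v) ≤ 2*(b^2-E)*(9801/10000*a^2+2*α*v) := by
        linarith [mul_le_mul_of_nonneg_right hgap hpos2]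
      have p2 : 2*(b^2-E)*(9801/10000*a^2+2*α*v) ≤ 2*(b^2-E)*(b^2+2*α*v) := by
        linarith [mul_le_mul_of_nonneg_left (by linarith [hb2] : 9801/10000*a^2+2*α*v ≤ b^2+2*α*v) hbE]
      have ha4 : 0 < a^4 := by positivity
      have hY : 0 ≤ α*(a^2*v) := by positivity
      linarith [h1, p1, p2, h2gen v hv, h3gen, ha4, hY]
  refine ⟨?_, hbac⟩
  -- Part 1 : 2*u < v, using b < a*c
  by_contra hvu
  push_neg at hvu  -- v ≤ 2*u
  have hgap : a*b*c ≤ a^2 - E := by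
    linarith [mul_lt_mul_of_pos_left hbac hb, hD]
  have hAE : E ≤ a^2 := by linarith [hgap, mul_nonneg hab0.le hc0]
  have hk := key α (a^2) E Z u hu hα.le hAE hP'
  have htab : (0:ℝ) ≤ t*(a*b) := by positivity
  have hZb1 : Z ≤ u + t*(a*b) := by rw [hZ]; linarith
  have hZb2 : -(u + t*(a*b)) ≤ Z := by rw [hZ]; linarith
  have hZsq : Z^2 ≤ (u + t*(a*b))^2 := sq_le_sq' hZb2 hZb1
  have h1 : 2*(a^2-E)*(a^2+2*α*u) < 4*α^2*(2*t*(a*b)*u) + 4*α^2*(t^2*(a*b)^2) := by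
    linarith [hk, mul_le_mul_of_nonneg_left hZsq (by positivity : (0:ℝ) ≤ 4*α^2)]
  have hpos2 : 0 ≤ a^2+2*α*u := by linarith [mul_nonneg hα.le hu, sq_nonneg a]
  have h4 : 2*(a*b*c)*(a^2+2*α*u) ≤ 2*(a^2-E)*(a^2+2*α*u) := by
    linarith [mul_le_mul_of_nonneg_right hgap hpos2]
  have h5 : 99/100*(2*(a*b)*(a^2+2*α*u)) ≤ 2*(a*b*c)*(a^2+2*α*u) := by
    have h6 : 0 ≤ 2*(a*b)*(a^2+2*α*u) := by
      linarith [mul_le_mul_of_nonneg_left hpos2 (by positivity : (0:ℝ) ≤ 2*(a*b))]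
    linarith [mul_le_mul_of_nonneg_right (by linarith : (99:ℝ)/100 ≤ c) h6]
  have h2 : 4*α^2*(2*t*(a*b)*u) ≤ 8/25*(α*(a*b*u)) := by
    have e2 : 0 ≤ α*(a*b*u) := by positivity
    linarith [mul_le_mul_of_nonneg_right (by linarith : 8*(α*t) ≤ 8/25) e2]
  have h3 : 4*α^2*(t^2*(a*b)^2) ≤ 4/625*(a^3*b) := by
    have e3 : 4*α^2*t^2 ≤ 4/625 := by
      linarith [mul_self_le_mul_self (by positivity : (0:ℝ) ≤ α*t) hαt]
    have e4 : (a*b)^2 ≤ a^3*b := by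
      linarith [mul_nonneg (mul_nonneg (mul_nonneg ha.le ha.le) hb.le)
        (by linarith : (0:ℝ) ≤ a - b)]
    linarith [mul_le_mul e3 e4 (by positivity) (by norm_num)]
  have hX : 0 < a^3*b := by positivity
  have hY : 0 ≤ α*(a*b*u) := by positivity
  linarith [h1, h4, h5, h2, h3, hX, hY]

lemma unpack (α X Y : ℝ) (hα : 0 < α)
    (h : ¬ Real.sqrt (X/(2*α^2)) ≤ Real.sqrt (Y/(2*α^2))) : Y < X := by
  by_contra h2
  push_neg at h2
  exact h (Real.sqrt_le_sqrt (by gcongr))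

lemma hmul_hinv_zero (w : H) : hmul (hinv 0) w = w := by
  obtain ⟨x, y, z⟩ := w
  simp [hmul, hinv, Prod.ext_iff]


theorem stmt11 (α : ℝ) (hα : 0 < α) (hα2 : α ≤ 2) :
    ∃ θ₁ : ℝ, 0 < θ₁ ∧ θ₁ < π / 8 ∧
      ∀ θ : ℝ, 0 < θ → θ < θ₁ → ∀ p q : H,
        p.2.2 ≤ 0 → q.2.2 ≤ 0 → rho q ≤ rho p →
        |p.2.1| < p.1 * Real.tan θ → |q.2.1| < q.1 * Real.tan θ →
        ¬ dA α p q ≤ dA α 0 p → ¬ dA α q p ≤ dA α 0 q →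
        q.2.2 < 2 * p.2.2 ∧ rho q < rho p * Real.cos (2 * θ) := by
  have hπ : (3:ℝ) < π := Real.pi_gt_three
  refine ⟨1/100, by norm_num, by linarith, ?_⟩
  intro θ hθ0 hθ1 p q hzp hzq hρ hyp hyq hnp hnq
  obtain ⟨xp, yp, zp⟩ := p
  obtain ⟨xq, yq, zq⟩ := q
  -- trigonometric facts
  have hθ2 : θ < π/2 := by linarith
  have ht0 : 0 < Real.tan θ := Real.tan_pos_of_pos_of_lt_pi_div_two hθ0 hθ2
  have hθθ : θ*θ ≤ θ*(1/100) := mul_le_mul_of_nonneg_left hθ1.le hθ0.le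
  have hcosθ : 1/2 ≤ Real.cos θ := by
    have h1 := Real.one_sub_sq_div_two_le_cos (x := θ)
    linarith [h1, hθθ]
  have hcos0 : Real.cos θ ≠ 0 := by
    intro h; rw [h] at hcosθ; linarith
  have htle : Real.tan θ ≤ 1/50 := by
    rw [Real.tan_eq_sin_div_cos, div_le_iff₀ (by linarith)]
    have h2 : Real.sin θ < θ := Real.sin_lt hθ0
    linarith [h2, hcosθ]
  have hclb : 99/100 ≤ Real.cos (2*θ) := by
    have h1 := Real.one_sub_sq_div_two_le_cos (x := 2*θ)
    linarith [h1, hθθ]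
  have hc1 : Real.cos (2*θ) ≤ 1 := Real.cos_le_one _
  have hident : Real.cos (2*θ) * (1 + Real.tan θ^2) = 1 - Real.tan θ^2 := by
    rw [Real.cos_two_mul, ← Real.inv_one_add_tan_sq hcos0]
    have h1t : (0:ℝ) < 1 + Real.tan θ^2 := by positivity
    field_simp
    ring
  set t := Real.tan θ with ht_def
  set c := Real.cos (2*θ) with hc_def
  -- basic geometric facts
  have hyp' : |yp| < xp * t := hyp
  have hyq' : |yq| < xq * t := hyq
  have hxp : 0 < xp := by
    rcases le_or_gt xp 0 with h | h
    · exfalso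
      have h0 : 0 < xp * t := lt_of_le_of_lt (abs_nonneg yp) hyp'
      linarith [mul_nonneg (neg_nonneg.mpr h) ht0.le]
    · exact h
  have hxq : 0 < xq := by
    rcases le_or_gt xq 0 with h | h
    · exfalso
      have h0 : 0 < xq * t := lt_of_le_of_lt (abs_nonneg yq) hyq'
      linarith [mul_nonneg (neg_nonneg.mpr h) ht0.le]
    · exact h
  set a := rho ((xp,yp,zp) : H) with ha_def
  set b := rho ((xq,yq,zq) : H) with hb_def
  have ha_sqrt : a = Real.sqrt (xp^2 + yp^2) := rfl
  have hb_sqrt : b = Real.sqrt (xq^2 + yq^2) := rfl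
  have ha2 : a^2 = xp^2 + yp^2 := by rw [ha_sqrt]; exact Real.sq_sqrt (by positivity)
  have hb2 : b^2 = xq^2 + yq^2 := by rw [hb_sqrt]; exact Real.sq_sqrt (by positivity)
  have hxa : xp ≤ a := by
    rw [ha_sqrt]
    calc xp = Real.sqrt (xp^2) := (Real.sqrt_sq hxp.le).symm
      _ ≤ Real.sqrt (xp^2 + yp^2) := Real.sqrt_le_sqrt (by linarith [sq_nonneg yp])
  have hxb : xq ≤ b := by
    rw [hb_sqrt]
    calc xq = Real.sqrt (xq^2) := (Real.sqrt_sq hxq.le).symm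
      _ ≤ Real.sqrt (xq^2 + yq^2) := Real.sqrt_le_sqrt (by linarith [sq_nonneg yq])
  have hapos : 0 < a := lt_of_lt_of_le hxp hxa
  have hbpos : 0 < b := lt_of_lt_of_le hxq hxb
  have hba : b ≤ a := hρ
  have hyp2 : yp^2 < (xp*t)^2 := by
    have h1 := mul_self_lt_mul_self (abs_nonneg yp) hyp'
    linarith [h1, abs_mul_abs_self yp]
  have hyq2 : yq^2 < (xq*t)^2 := by
    have h1 := mul_self_lt_mul_self (abs_nonneg yq) hyq'
    linarith [h1, abs_mul_abs_self yq]
  -- the inner product bound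
  have hab : a*b ≤ xp*xq*(1+t^2) := by
    have hab2 : a^2*b^2 = (xp^2+yp^2)*(xq^2+yq^2) := by rw [ha2, hb2]
    have m1 : xp^2*yq^2 ≤ xp^2*(xq*t)^2 := mul_le_mul_of_nonneg_left hyq2.le (sq_nonneg xp)
    have m2 : yp^2*xq^2 ≤ (xp*t)^2*xq^2 := mul_le_mul_of_nonneg_right hyp2.le (sq_nonneg xq)
    have m3 : yp^2*yq^2 ≤ (xp*t)^2*(xq*t)^2 :=
      mul_le_mul hyp2.le hyq2.le (sq_nonneg yq) (sq_nonneg (xp*t))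
    have h1 : (a*b)^2 ≤ (xp*xq*(1+t^2))^2 := by linarith [hab2, m1, m2, m3]
    calc a*b = Real.sqrt ((a*b)^2) := (Real.sqrt_sq (by positivity)).symm
      _ ≤ Real.sqrt ((xp*xq*(1+t^2))^2) := Real.sqrt_le_sqrt h1
      _ = xp*xq*(1+t^2) := Real.sqrt_sq (by positivity)
  have hD : a*b*c ≤ xp*xq + yp*yq := by
    have hcge0 : (0:ℝ) ≤ c := by linarith
    have habc : a*b*c ≤ xp*xq*(1+t^2)*c := mul_le_mul_of_nonneg_right hab hcge0
    have hid2 : xp*xq*(1+t^2)*c = xp*xq*(1-t^2) := by linear_combination (xp*xq) * hident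
    have h6 : |yp| * |yq| ≤ (xp*t)*(xq*t) :=
      mul_le_mul hyp'.le hyq'.le (abs_nonneg yq) (by positivity)
    have h7 : -(|yp| * |yq|) ≤ yp*yq := by rw [← abs_mul]; exact neg_abs_le _
    linarith [habc, hid2, h6, h7]
  -- the cross term bounds
  have hxpxqab : xp*xq ≤ a*b := mul_le_mul hxa hxb hxq.le hapos.le
  have hw1 : (xp*yq - yp*xq)/2 ≤ t*(a*b) := by
    have l1 : xp*yq ≤ xp*(xq*t) :=
      mul_le_mul_of_nonneg_left ((le_abs_self yq).trans hyq'.le) hxp.le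
    have l2 : (-yp)*xq ≤ (xp*t)*xq :=
      mul_le_mul_of_nonneg_right ((neg_le_abs yp).trans hyp'.le) hxq.le
    have l3 : (xp*xq)*t ≤ (a*b)*t := mul_le_mul_of_nonneg_right hxpxqab ht0.le
    linarith [l1, l2, l3]
  have hw2 : -((xp*yq - yp*xq)/2) ≤ t*(a*b) := by
    have l1 : yp*xq ≤ (xp*t)*xq :=
      mul_le_mul_of_nonneg_right ((le_abs_self yp).trans hyp'.le) hxq.le
    have l2 : xp*(-yq) ≤ xp*(xq*t) :=
      mul_le_mul_of_nonneg_left ((neg_le_abs yq).trans hyq'.le) hxp.le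
    have l3 : (xp*xq)*t ≤ (a*b)*t := mul_le_mul_of_nonneg_right hxpxqab ht0.le
    linarith [l1, l2, l3]
  -- unpack the two non-ball conditions
  set E := a^2 + b^2 - 2*(xp*xq + yp*yq) with hE_def
  set Z := -zp - -zq - (xp*yq - yp*xq)/2 with hZ_def
  have hwpq : hmul (hinv ((xp,yp,zp):H)) ((xq,yq,zq):H)
      = (xq - xp, yq - yp, (zq - zp) - (xp*yq - yp*xq)/2) := by
    simp only [hmul, hinv, Prod.ext_iff]
    refine ⟨by ring, by ring, by ring⟩
  have hwqp : hmul (hinv ((xq,yq,zq):H)) ((xp,yp,zp):H)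
      = (xp - xq, yp - yq, (zp - zq) - (xq*yp - yq*xp)/2) := by
    simp only [hmul, hinv, Prod.ext_iff]
    refine ⟨by ring, by ring, by ring⟩
  have hrpq2 : (rho (hmul (hinv ((xp,yp,zp):H)) ((xq,yq,zq):H)))^2 = E := by
    rw [hwpq]
    show (Real.sqrt ((xq-xp)^2 + (yq-yp)^2))^2 = E
    rw [Real.sq_sqrt (by positivity), hE_def]
    linear_combination -ha2 - hb2
  have hrqp2 : (rho (hmul (hinv ((xq,yq,zq):H)) ((xp,yp,zp):H)))^2 = E := by
    rw [hwqp]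
    show (Real.sqrt ((xp-xq)^2 + (yp-yq)^2))^2 = E
    rw [Real.sq_sqrt (by positivity), hE_def]
    linear_combination -ha2 - hb2
  have hrpq4 : (rho (hmul (hinv ((xp,yp,zp):H)) ((xq,yq,zq):H)))^4 = E^2 := by
    rw [show (rho (hmul (hinv ((xp,yp,zp):H)) ((xq,yq,zq):H)))^4
      = ((rho (hmul (hinv ((xp,yp,zp):H)) ((xq,yq,zq):H)))^2)^2 by ring, hrpq2]
  have hrqp4 : (rho (hmul (hinv ((xq,yq,zq):H)) ((xp,yp,zp):H)))^4 = E^2 := by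
    rw [show (rho (hmul (hinv ((xq,yq,zq):H)) ((xp,yp,zp):H)))^4
      = ((rho (hmul (hinv ((xq,yq,zq):H)) ((xp,yp,zp):H)))^2)^2 by ring, hrqp2]
  have hzpq : (hmul (hinv ((xp,yp,zp):H)) ((xq,yq,zq):H)).2.2 ^ 2 = Z^2 := by
    rw [hwpq, hZ_def]; ring
  have hzqp : (hmul (hinv ((xq,yq,zq):H)) ((xp,yp,zp):H)).2.2 ^ 2 = Z^2 := by
    rw [hwqp, hZ_def]; ring
  have hP : a^2 + Real.sqrt (a^4 + 4*α^2*(-zp)^2) < E + Real.sqrt (E^2 + 4*α^2*Z^2) := by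
    have hup := unpack α _ _ hα (by unfold dA at hnp; exact hnp)
    rw [hmul_hinv_zero, hrpq2, hrpq4, hzpq] at hup
    rw [← ha_def] at hup
    rw [show (((xp,yp,zp):H).2.2)^2 = (-zp)^2 by ring] at hup
    exact hup
  have hQ : b^2 + Real.sqrt (b^4 + 4*α^2*(-zq)^2) < E + Real.sqrt (E^2 + 4*α^2*Z^2) := by
    have hup := unpack α _ _ hα (by unfold dA at hnq; exact hnq)
    rw [hmul_hinv_zero, hrqp2, hrqp4, hzqp] at hup
    rw [← hb_def] at hup
    rw [show (((xq,yq,zq):H).2.2)^2 = (-zq)^2 by ring] at hup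
    exact hup
  -- apply the core lemma
  have hzp' : (0:ℝ) ≤ -zp := by
    have h : zp ≤ 0 := hzp
    linarith
  have hzq' : (0:ℝ) ≤ -zq := by
    have h : zq ≤ 0 := hzq
    linarith
  have hmain := core α t c a b (-zp) (-zq) (xp*xq + yp*yq) ((xp*yq - yp*xq)/2) E Z
    hα hα2 ht0 htle hclb hc1 hapos hbpos hba hzp' hzq' hD hw1 hw2 (by rw [hE_def])
    (by rw [hZ_def]) hP hQ
  obtain ⟨h1, h2⟩ := hmain
  refine ⟨?_, h2⟩
  show zq < 2 * zp
  linarith
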